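/- For every (t₁,t₂) ∈ ℝ² and every unit vector τ ∈ ℝ^d, the support function of 𝒞 = { (s₁,s₂) : (1/2)s₁² + s₂ ≤ 1 } and the support function of C = { (z,M) ∈ ℝ^d × Sym(d,ℝ) : (1/2)(z⊗z) + M ≤ Id } satisfy χ_𝒞*(t₁,t₂) = χ_C*(t₁·τ, t₂·(τ ⊗ τ)). -/

import Mathlib

/-! The maps `s ↦ (s₁ τ, s₂ τ ⊗ τ)` and `(z, M) ↦ (τ ⬝ z, τ ⬝ M τ)` send `𝒞` into `C` and `C` into
`𝒞`, the second is a left inverse of the first, and pairing `(z, M)` with `(t₁ τ, t₂ τ ⊗ τ)` is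
pairing its image with `(t₁, t₂)`. Hence both suprema run over the same values. That `C` lands in
`𝒞` is the constraint `1 - (½ z ⊗ z + M) ⪰ 0` tested on `τ`; that `𝒞` lands in `C` is the
positivity of `1 - c τ ⊗ τ` for `c ≤ 1`, i.e. Cauchy–Schwarz. -/

open Matrix

section

variable {n : Type*} [Fintype n]

lemma sq_dotProduct_le_dotProduct_self_mul (u v : n → ℝ) :
    (u ⬝ᵥ v) ^ 2 ≤ (u ⬝ᵥ u) * (v ⬝ᵥ v) := by
  simpa only [dotProduct, sq] using Finset.sum_mul_sq_le_sq_mul_sq Finset.univ u v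

lemma trace_vecMulVec_mul {R : Type*} [CommSemiring R] (a b : n → R) (M : Matrix n n R) :
    (vecMulVec a b * M).trace = b ⬝ᵥ (M *ᵥ a) := by
  rw [vecMulVec_mul, trace_vecMulVec, dotProduct_comm, ← dotProduct_mulVec]

def liftAlong (τ : n → ℝ) (s : ℝ × ℝ) : (n → ℝ) × Matrix n n ℝ :=
  (s.1 • τ, s.2 • vecMulVec τ τ)

def restrictTo (τ : n → ℝ) (p : (n → ℝ) × Matrix n n ℝ) : ℝ × ℝ :=
  (τ ⬝ᵥ p.1, τ ⬝ᵥ (p.2 *ᵥ τ))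

lemma restrictTo_liftAlong {τ : n → ℝ} (hτ : τ ⬝ᵥ τ = 1) (s : ℝ × ℝ) :
    restrictTo τ (liftAlong τ s) = s := by
  simp only [restrictTo, liftAlong, dotProduct_smul, smul_mulVec, vecMulVec_mulVec,
    op_smul_eq_smul, smul_eq_mul, hτ, mul_one]

lemma dotProduct_add_trace_eq_restrictTo (t₁ t₂ : ℝ) (τ : n → ℝ) (p : (n → ℝ) × Matrix n n ℝ) :
    (t₁ • τ) ⬝ᵥ p.1 + ((t₂ • vecMulVec τ τ) * p.2).trace
      = (restrictTo τ p).1 * t₁ + (restrictTo τ p).2 * t₂ := by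
  simp only [restrictTo, smul_dotProduct, smul_mul_assoc, trace_smul, trace_vecMulVec_mul,
    smul_eq_mul]
  ring

variable [DecidableEq n]

lemma posSemidef_one_sub_vecMulVec_self {τ : n → ℝ} (hτ : τ ⬝ᵥ τ ≤ 1) :
    (1 - vecMulVec τ τ).PosSemidef := by
  have hherm : (vecMulVec τ τ).IsHermitian := by
    simpa only [star_trivial] using (posSemidef_vecMulVec_self_star τ).isHermitian
  refine .of_dotProduct_mulVec_nonneg (isHermitian_one.sub hherm) fun x => ?_
  simp only [star_trivial, sub_mulVec, one_mulVec, vecMulVec_mulVec, op_smul_eq_smul,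
    dotProduct_sub, dotProduct_smul, smul_eq_mul, dotProduct_comm x τ]
  have hx : 0 ≤ x ⬝ᵥ x := by simpa only [star_trivial] using dotProduct_star_self_nonneg x
  nlinarith [sq_dotProduct_le_dotProduct_self_mul τ x]

lemma posSemidef_one_sub_smul_vecMulVec_self {τ : n → ℝ} (hτ : τ ⬝ᵥ τ ≤ 1) {c : ℝ}
    (hc : c ≤ 1) : (1 - c • vecMulVec τ τ).PosSemidef := by
  have hsplit : 1 - c • vecMulVec τ τ = (1 - vecMulVec τ τ) + (1 - c) • vecMulVec τ τ := by
    module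
  have hττ : (vecMulVec τ τ).PosSemidef := by
    simpa only [star_trivial] using posSemidef_vecMulVec_self_star τ
  rw [hsplit]
  exact (posSemidef_one_sub_vecMulVec_self hτ).add (hττ.smul (sub_nonneg.2 hc))

def parabolicRegion : Set (ℝ × ℝ) := {s | (1/2) * s.1 ^ 2 + s.2 ≤ 1}

variable (n) in
def matrixParabolicRegion : Set ((n → ℝ) × Matrix n n ℝ) :=
  {p | p.2.IsSymm ∧ (1 - ((1/2 : ℝ) • vecMulVec p.1 p.1 + p.2)).PosSemidef}

lemma liftAlong_mem {τ : n → ℝ} (hτ : τ ⬝ᵥ τ ≤ 1) {s : ℝ × ℝ} (hs : s ∈ parabolicRegion) :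
    liftAlong τ s ∈ matrixParabolicRegion n := by
  refine ⟨IsSymm.smul (transpose_vecMulVec τ τ) s.2, ?_⟩
  have hcollapse : (1/2 : ℝ) • vecMulVec (s.1 • τ) (s.1 • τ) + s.2 • vecMulVec τ τ
      = ((1/2) * s.1 ^ 2 + s.2) • vecMulVec τ τ := by
    rw [smul_vecMulVec, vecMulVec_smul]
    module
  rw [liftAlong, hcollapse]
  exact posSemidef_one_sub_smul_vecMulVec_self hτ hs

lemma restrictTo_mem {τ : n → ℝ} (hτ : τ ⬝ᵥ τ = 1) {p : (n → ℝ) × Matrix n n ℝ}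
    (hp : p ∈ matrixParabolicRegion n) : restrictTo τ p ∈ parabolicRegion := by
  have h := hp.2.dotProduct_mulVec_nonneg τ
  simp only [star_trivial, sub_mulVec, one_mulVec, add_mulVec, smul_mulVec, vecMulVec_mulVec,
    op_smul_eq_smul, dotProduct_sub, dotProduct_add, dotProduct_smul, smul_eq_mul, hτ,
    dotProduct_comm p.1 τ] at h
  simp only [parabolicRegion, restrictTo, Set.mem_ofPred_eq]
  linarith

end

theorem stmt19 {d : ℕ} (t₁ t₂ : ℝ) (τ : Fin d → ℝ) (hτ : τ ⬝ᵥ τ = 1) :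
    (⨆ s ∈ {p : ℝ × ℝ | (1/2) * p.1^2 + p.2 ≤ 1}, ((s.1 * t₁ + s.2 * t₂ : ℝ) : EReal))
    = ⨆ p ∈ {q : (Fin d → ℝ) × Matrix (Fin d) (Fin d) ℝ | q.2.IsSymm ∧
        ((1 : Matrix (Fin d) (Fin d) ℝ) -
          ((1/2 : ℝ) • Matrix.vecMulVec q.1 q.1 + q.2)).PosSemidef},
      ((((t₁ • τ) ⬝ᵥ p.1) + ((t₂ • Matrix.vecMulVec τ τ) * p.2).trace : ℝ) : EReal) := by
  apply le_antisymm
  · refine iSup₂_mono' fun s hs => ⟨liftAlong τ s, liftAlong_mem hτ.le hs, ?_⟩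
    rw [dotProduct_add_trace_eq_restrictTo, restrictTo_liftAlong hτ]
  · refine iSup₂_mono' fun p hp => ⟨restrictTo τ p, restrictTo_mem hτ hp, ?_⟩
    rw [dotProduct_add_trace_eq_restrictTo]
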